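/- Let a > 0 and define G(τ) := δ₀(τ) − e^{−aτ} sin(τ) 𝟙_{[0,∞)}(τ) interpreted as follows: suppose ρ, H : [0,∞) → ℂ are continuous and satisfy the Volterra equation ρ(t) + ∫₀ᵗ (t−s) e^{−a(t−s)} ρ(s) ds = H(t) for all t ≥ 0, where the convolution kernel r e^{−ar} arises from a = |ξ|. Then ρ(t) = H(t) − ∫₀ᵗ e^{−as} sin(s) H(t−s) ds for all t ≥ 0. -/

import Mathlib

/-!
Write `f ⋆ g` for `t ↦ ∫₀ᵗ f s * g (t - s) ds`, so the equation reads `ρ + K ⋆ ρ = H` with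
`K r = r e^{-ar}`. The function `R r = e^{-ar} sin r` satisfies `R ⋆ K = K - R`: the factor `e^{-ar}`
comes out of the integral and `∫₀ʳ (r - s) sin s ds = r - sin r`. As `⋆` is commutative and
associative (Fubini on a triangle), `R ⋆ (H - ρ) = R ⋆ (K ⋆ ρ) = (K - R) ⋆ ρ`, i.e. `R ⋆ H = K ⋆ ρ = H - ρ`.
-/

open MeasureTheory Set

noncomputable def causalConv (f g : ℝ → ℂ) (t : ℝ) : ℂ :=
  ∫ s in (0:ℝ)..t, f s * g (t - s)

lemma causalConv_eq_integral_sub_mul (f g : ℝ → ℂ) (t : ℝ) :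
    causalConv f g t = ∫ s in (0:ℝ)..t, f (t - s) * g s := by
  unfold causalConv
  simpa using (intervalIntegral.integral_comp_sub_left (fun s => f s * g (t - s)) t
    (a := 0) (b := t)).symm

lemma causalConv_comm (f g : ℝ → ℂ) : causalConv f g = causalConv g f := by
  ext t
  rw [causalConv_eq_integral_sub_mul]
  simp only [causalConv, mul_comm]

lemma causalConv_congr {f f' g g' : ℝ → ℂ} {t : ℝ} (ht : 0 ≤ t)
    (hf : EqOn f f' (Icc 0 t)) (hg : EqOn g g' (Icc 0 t)) :
    causalConv f g t = causalConv f' g' t := by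
  refine intervalIntegral.integral_congr fun s hs => ?_
  rw [uIcc_of_le ht] at hs
  simp only [hf hs, hg (⟨sub_nonneg.2 hs.2, by linarith [hs.1]⟩ : t - s ∈ Icc 0 t)]

lemma causalConv_sub_left {f f' g : ℝ → ℂ} (hf : Continuous f) (hf' : Continuous f')
    (hg : Continuous g) (t : ℝ) :
    causalConv (f - f') g t = causalConv f g t - causalConv f' g t := by
  simp only [causalConv, Pi.sub_apply, sub_mul]
  exact intervalIntegral.integral_sub
    ((hf.mul (hg.comp (continuous_sub_left t))).intervalIntegrable _ _)
    ((hf'.mul (hg.comp (continuous_sub_left t))).intervalIntegrable _ _)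

lemma causalConv_sub_right {f g g' : ℝ → ℂ} (hf : Continuous f) (hg : Continuous g)
    (hg' : Continuous g') (t : ℝ) :
    causalConv f (g - g') t = causalConv f g t - causalConv f g' t := by
  rw [causalConv_comm, causalConv_sub_left hg hg' hf, causalConv_comm f, causalConv_comm f]

lemma intervalIntegral_eq_setIntegral_indicator_Iic {g : ℝ → ℂ} {b t : ℝ} (hb : 0 ≤ b)
    (hbt : b ≤ t) : ∫ u in (0:ℝ)..b, g u = ∫ u in Ioc 0 t, (Iic b).indicator g u := by
  rw [intervalIntegral.integral_of_le hb, setIntegral_indicator measurableSet_Iic, Ioc_inter_Iic,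
    min_eq_right hbt]

lemma integral_integral_sub_swap {f : ℝ → ℝ → ℂ} (hf : Continuous (Function.uncurry f))
    {t : ℝ} (ht : 0 ≤ t) :
    ∫ s in (0:ℝ)..t, ∫ u in (0:ℝ)..(t - s), f s u
      = ∫ u in (0:ℝ)..t, ∫ s in (0:ℝ)..(t - u), f s u := by
  set F := {p : ℝ × ℝ | p.1 + p.2 ≤ t}.indicator (Function.uncurry f)
  have hF_fst (s u : ℝ) : F (s, u) = (Iic (t - s)).indicator (f s) u := by
    simp only [F, indicator, mem_ofPred_eq, mem_Iic, le_sub_iff_add_le',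
      Function.uncurry_apply_pair]
  have hF_snd (s u : ℝ) : F (s, u) = (Iic (t - u)).indicator (f · u) s := by
    simp only [F, indicator, mem_ofPred_eq, mem_Iic, le_sub_iff_add_le,
      Function.uncurry_apply_pair]
  have hF_int : Integrable F ((volume.restrict (Ioc 0 t)).prod (volume.restrict (Ioc 0 t))) := by
    rw [Measure.prod_restrict, ← Measure.volume_eq_prod]
    exact ((hf.continuousOn.integrableOn_compact (isCompact_Icc.prod isCompact_Icc)).mono_set
      (prod_mono Ioc_subset_Icc_self Ioc_subset_Icc_self)).indicator
      (isClosed_le (by fun_prop) continuous_const).measurableSet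
  rw [intervalIntegral.integral_of_le ht, intervalIntegral.integral_of_le ht]
  calc ∫ s in Ioc 0 t, ∫ u in (0:ℝ)..(t - s), f s u
      = ∫ s in Ioc 0 t, ∫ u in Ioc 0 t, F (s, u) := by
        refine setIntegral_congr_fun measurableSet_Ioc fun s hs => ?_
        simp only [hF_fst]
        exact intervalIntegral_eq_setIntegral_indicator_Iic (by linarith [hs.2])
          (by linarith [hs.1])
    _ = ∫ u in Ioc 0 t, ∫ s in Ioc 0 t, F (s, u) := integral_integral_swap hF_int
    _ = ∫ u in Ioc 0 t, ∫ s in (0:ℝ)..(t - u), f s u := by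
        refine setIntegral_congr_fun measurableSet_Ioc fun u hu => ?_
        simp only [hF_snd]
        exact (intervalIntegral_eq_setIntegral_indicator_Iic (by linarith [hu.2])
          (by linarith [hu.1])).symm

lemma causalConv_assoc {f g h : ℝ → ℂ} (hf : Continuous f) (hg : Continuous g)
    (hh : Continuous h) {t : ℝ} (ht : 0 ≤ t) :
    causalConv (causalConv f g) h t = causalConv f (causalConv g h) t := by
  have hswap := integral_integral_sub_swap (f := fun x w => h w * (f x * g (t - w - x)))
    (by fun_prop) ht
  rw [causalConv_comm _ h, funext (causalConv_eq_integral_sub_mul g h)]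
  simp only [causalConv, ← intervalIntegral.integral_const_mul] at hswap ⊢
  rw [← hswap]
  congr! 3 with s
  funext w
  rw [sub_right_comm]
  ring

noncomputable def memoryKernel (a r : ℝ) : ℂ := ((r * Real.exp (-(a * r)) : ℝ) : ℂ)

noncomputable def resolventKernel (a r : ℝ) : ℂ := ((Real.exp (-(a * r)) * Real.sin r : ℝ) : ℂ)

lemma continuous_memoryKernel (a : ℝ) : Continuous (memoryKernel a) := by
  unfold memoryKernel; fun_prop

lemma continuous_resolventKernel (a : ℝ) : Continuous (resolventKernel a) := by
  unfold resolventKernel; fun_prop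

lemma integral_sub_mul_sin (r : ℝ) : ∫ s in (0:ℝ)..r, (r - s) * Real.sin s = r - Real.sin r := by
  have hderiv (x : ℝ) :
      HasDerivAt (fun s => -((r - s) * Real.cos s) - Real.sin s) ((r - x) * Real.sin x) x := by
    refine ((((hasDerivAt_id' x).const_sub r).fun_mul (Real.hasDerivAt_cos x)).fun_neg.fun_sub
      (Real.hasDerivAt_sin x)).congr_deriv ?_
    ring
  rw [intervalIntegral.integral_eq_sub_of_hasDerivAt (fun x _ => hderiv x)
    ((by fun_prop : Continuous fun s => (r - s) * Real.sin s).intervalIntegrable _ _)]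
  simp only [sub_self, zero_mul, neg_zero, Real.sin_zero, sub_zero, Real.cos_zero, mul_one]
  ring

lemma causalConv_resolventKernel_memoryKernel (a : ℝ) :
    causalConv (resolventKernel a) (memoryKernel a) = memoryKernel a - resolventKernel a := by
  ext r
  have hintegrand (s : ℝ) : resolventKernel a s * memoryKernel a (r - s)
      = ((Real.exp (-(a * r)) * ((r - s) * Real.sin s) : ℝ) : ℂ) := by
    have hexp : Real.exp (-(a * s)) * Real.exp (-(a * (r - s))) = Real.exp (-(a * r)) := by
      rw [← Real.exp_add]; ring_nf
    simp only [resolventKernel, memoryKernel, ← Complex.ofReal_mul, ← hexp]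
    congr 1
    ring
  simp only [causalConv, hintegrand]
  rw [intervalIntegral.integral_ofReal, intervalIntegral.integral_const_mul, integral_sub_mul_sin]
  simp only [Pi.sub_apply, memoryKernel, resolventKernel]
  push_cast
  ring

theorem eq_sub_causalConv_resolventKernel {a : ℝ} {ρ H : ℝ → ℂ} (hρ : Continuous ρ)
    (hH : Continuous H) (heq : ∀ t, 0 ≤ t → ρ t + causalConv (memoryKernel a) ρ t = H t)
    {t : ℝ} (ht : 0 ≤ t) : ρ t = H t - causalConv (resolventKernel a) H t := by
  have hK := continuous_memoryKernel a
  have hR := continuous_resolventKernel a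
  have hHρ : EqOn (H - ρ) (causalConv (memoryKernel a) ρ) (Icc 0 t) := fun s hs => by
    simp only [Pi.sub_apply, ← heq s hs.1, add_sub_cancel_left]
  calc ρ t = H t - causalConv (memoryKernel a) ρ t := by rw [← heq t ht, add_sub_cancel_right]
    _ = H t - (causalConv (memoryKernel a - resolventKernel a) ρ t
          + causalConv (resolventKernel a) ρ t) := by
      rw [causalConv_sub_left hK hR hρ, sub_add_cancel]
    _ = H t - (causalConv (resolventKernel a) (H - ρ) t
          + causalConv (resolventKernel a) ρ t) := by
      rw [← causalConv_resolventKernel_memoryKernel, causalConv_assoc hR hK hρ ht,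
        causalConv_congr ht (eqOn_refl _ _) hHρ]
    _ = H t - causalConv (resolventKernel a) H t := by
      rw [causalConv_sub_right hR hH hρ, sub_add_cancel]

lemma ContinuousOn.continuous_comp_max {α : Type*} [TopologicalSpace α] {f : ℝ → α} {a : ℝ}
    (hf : ContinuousOn f (Ici a)) :
    Continuous fun x => f (max a x) :=
  hf.comp_continuous (continuous_const.max continuous_id) fun x => le_max_left a x

lemma eqOn_comp_max {α β : Type*} [LinearOrder α] (f : α → β) (a : α) :
    EqOn f (fun x => f (max a x)) (Ici a) :=
  fun _ hx => congrArg f (max_eq_right hx).symm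

theorem stmt3_general (a : ℝ) (ρ H : ℝ → ℂ)
    (hρ : ContinuousOn ρ (Set.Ici 0)) (hH : ContinuousOn H (Set.Ici 0))
    (heq : ∀ t : ℝ, 0 ≤ t →
      ρ t + ∫ s in (0:ℝ)..t, (((t - s) * Real.exp (-(a * (t - s))) : ℝ) : ℂ) * ρ s = H t) :
    ∀ t : ℝ, 0 ≤ t →
      ρ t = H t - ∫ s in (0:ℝ)..t,
        ((Real.exp (-(a * s)) * Real.sin s : ℝ) : ℂ) * H (t - s) := by
  intro t ht
  have hρ' (s : ℝ) : EqOn ρ (fun x => ρ (max 0 x)) (Icc 0 s) :=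
    (eqOn_comp_max ρ 0).mono Icc_subset_Ici_self
  have hH' : EqOn H (fun x => H (max 0 x)) (Icc 0 t) :=
    (eqOn_comp_max H 0).mono Icc_subset_Ici_self
  have heq' (s : ℝ) (hs : 0 ≤ s) :
      ρ (max 0 s) + causalConv (memoryKernel a) (fun x => ρ (max 0 x)) s = H (max 0 s) := by
    rw [max_eq_right hs, ← causalConv_congr hs (eqOn_refl _ _) (hρ' s),
      causalConv_eq_integral_sub_mul]
    exact heq s hs
  have hsol := eq_sub_causalConv_resolventKernel hρ.continuous_comp_max hH.continuous_comp_max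
    heq' ht
  rwa [← causalConv_congr ht (eqOn_refl _ _) hH', max_eq_right ht] at hsol

theorem stmt3 (a : ℝ) (ha : 0 < a) (ρ H : ℝ → ℂ)
    (hρ : ContinuousOn ρ (Set.Ici 0)) (hH : ContinuousOn H (Set.Ici 0))
    (heq : ∀ t : ℝ, 0 ≤ t →
      ρ t + ∫ s in (0:ℝ)..t, (((t - s) * Real.exp (-(a * (t - s))) : ℝ) : ℂ) * ρ s = H t) :
    ∀ t : ℝ, 0 ≤ t →
      ρ t = H t - ∫ s in (0:ℝ)..t,
        ((Real.exp (-(a * s)) * Real.sin s : ℝ) : ℂ) * H (t - s) :=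
  stmt3_general a ρ H hρ hH heq
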